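/- One-step lift existence: Given any tropical n×(n+1) matrix O (real entries), there exists a matrix B over the Puiseux series field with T(b_{ij}) = o_{ij} for all i, j such that every maximal minor of B is nonzero and T(det(B^i)) = |O^i|_t for all i = 1,…,n+1; consequently the classical Cramer solution of B tropicalizes to the stable tropical solution [|O^1|_t : … : |O^{n+1}|_t]. -/

import Mathlib

/-- Tropicalization map on the field of (generalized) Puiseux series
`HahnSeries ℝ ℂ`: `T x = - ord x`. -/
noncomputable def T (x : HahnSeries ℝ ℂ) : ℝ := -x.order

/-- Principal coefficient: the coefficient of the lowest-order term. -/
noncomputable def Pc (x : HahnSeries ℝ ℂ) : ℂ := x.coeff x.order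

/-- Tropical determinant of a real square matrix. -/
noncomputable def tropDet {n : ℕ} (O : Matrix (Fin n) (Fin n) ℝ) : ℝ :=
  Finset.univ.sup' Finset.univ_nonempty (fun σ : Equiv.Perm (Fin n) => ∑ i, O i (σ i))

/-- Pseudo-determinant of `A` with respect to the tropical matrix `O`. -/
noncomputable def pseudoDet {n : ℕ} {R : Type*} [CommRing R]
    (O : Matrix (Fin n) (Fin n) ℝ) (A : Matrix (Fin n) (Fin n) R) : R :=
  ∑ σ ∈ Finset.univ.filter
      (fun σ : Equiv.Perm (Fin n) => ∑ i, O i (σ i) = tropDet O),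
    (Equiv.Perm.sign σ : ℤ) • ∏ i, A i (σ i)


/-! Take `b i j = c i j * t ^ (-o i j)`. Every maximal minor of `B` is then a signed sum of
monomials `(∏ c) * t ^ (-∑ o)` over permutations, so its coefficient at `t ^ (-|O^k|_t)` is the
pseudo-determinant of `c` with respect to `O^k`, and nothing of lower order occurs. Each
pseudo-determinant is a nonzero polynomial in the `c i j` (it is `±1` at the permutation matrix of a
maximizing permutation), so for generic complex `c` all of them and all `c i j` are nonzero, which
gives `T (det B^k) = |O^k|_t`. The signed minors lie in the kernel of `B` by Laplace expansion of
`B` with a repeated row. -/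

open Finset MvPolynomial

theorem HahnSeries.prod_single {ι Γ R : Type*} [AddCommMonoid Γ] [PartialOrder Γ]
    [IsOrderedCancelAddMonoid Γ] [CommSemiring R] (s : Finset ι) (a : ι → Γ) (r : ι → R) :
    ∏ i ∈ s, single (a i) (r i) = single (∑ i ∈ s, a i) (∏ i ∈ s, r i) := by
  classical
  induction s using Finset.induction_on with
  | empty => simp [single_zero_one]
  | insert i s hi ih =>
    rw [prod_insert hi, ih, single_mul_single, sum_insert hi, prod_insert hi]

section PseudoDet

variable {m : ℕ} {R : Type*} [CommRing R]

theorem exists_sum_eq_tropDet (O : Matrix (Fin m) (Fin m) ℝ) :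
    ∃ σ : Equiv.Perm (Fin m), ∑ i, O i (σ i) = tropDet O := by
  obtain ⟨σ, -, hσ⟩ :=
    exists_mem_eq_sup' univ_nonempty fun σ : Equiv.Perm (Fin m) => ∑ i, O i (σ i)
  exact ⟨σ, hσ.symm⟩

theorem sum_le_tropDet (O : Matrix (Fin m) (Fin m) ℝ) (σ : Equiv.Perm (Fin m)) :
    ∑ i, O i (σ i) ≤ tropDet O :=
  le_sup' (fun σ : Equiv.Perm (Fin m) => ∑ i, O i (σ i)) (mem_univ σ)

theorem RingHom.map_pseudoDet {S : Type*} [CommRing S] (f : R →+* S)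
    (O : Matrix (Fin m) (Fin m) ℝ) (A : Matrix (Fin m) (Fin m) R) :
    f (pseudoDet O A) = pseudoDet O (f.mapMatrix A) := by
  simp [pseudoDet, map_sum, map_prod]

theorem pseudoDet_permPattern {O : Matrix (Fin m) (Fin m) ℝ} {σ₀ : Equiv.Perm (Fin m)}
    (hσ₀ : ∑ i, O i (σ₀ i) = tropDet O) :
    pseudoDet O (Matrix.of fun i j => if σ₀ i = j then (1 : R) else 0)
      = (Equiv.Perm.sign σ₀ : ℤ) • 1 := by
  unfold pseudoDet
  rw [sum_eq_single_of_mem σ₀ (by simpa using hσ₀)]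
  · simp
  · intro σ _ hσ
    obtain ⟨i, hi⟩ : ∃ i, σ₀ i ≠ σ i := by
      by_contra! h
      exact hσ (Equiv.ext h).symm
    rw [prod_eq_zero (mem_univ i) (by simp [hi]), smul_zero]

theorem pseudoDet_X_ne_zero [Nontrivial R] {ι : Type*} (O : Matrix (Fin m) (Fin m) ℝ)
    {v : Fin m × Fin m → ι} (hv : v.Injective) :
    pseudoDet O (Matrix.of fun a b => (X (v (a, b)) : MvPolynomial ι R)) ≠ 0 := by
  classical
  obtain ⟨σ₀, hσ₀⟩ := exists_sum_eq_tropDet O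
  set x : ι → R := Function.extend v (fun p => if σ₀ p.1 = p.2 then 1 else 0) 0
  intro h
  have hx := congrArg (eval x) h
  rw [RingHom.map_pseudoDet, map_zero] at hx
  have : (eval x).mapMatrix (Matrix.of fun a b => (X (v (a, b)) : MvPolynomial ι R))
      = Matrix.of fun i j => if σ₀ i = j then (1 : R) else 0 := by
    ext a b
    simp [x, hv.extend_apply]
  rw [this, pseudoDet_permPattern hσ₀] at hx
  rcases Int.units_eq_one_or (Equiv.Perm.sign σ₀) with hs | hs <;> simp [hs] at hx

end PseudoDet

theorem exists_generic_coeffs {n : ℕ} {K : Type*} [CommRing K] [IsDomain K] [Infinite K]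
    (O : Matrix (Fin n) (Fin (n + 1)) ℝ) :
    ∃ c : Matrix (Fin n) (Fin (n + 1)) K, (∀ i j, c i j ≠ 0) ∧
      ∀ k : Fin (n + 1),
        pseudoDet (O.submatrix id k.succAbove) (c.submatrix id k.succAbove) ≠ 0 := by
  set P : MvPolynomial (Fin n × Fin (n + 1)) K := (∏ p, X p) *
    ∏ k : Fin (n + 1), pseudoDet (O.submatrix id k.succAbove)
      (Matrix.of fun a b => X (Prod.map id k.succAbove (a, b)))
  have hP : P ≠ 0 := mul_ne_zero (prod_ne_zero_iff.2 fun p _ => X_ne_zero p)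
    (prod_ne_zero_iff.2 fun k _ => pseudoDet_X_ne_zero _
      (Function.injective_id.prodMap (Fin.succAbove_right_injective (p := k))))
  obtain ⟨x, hx⟩ : ∃ x, eval x P ≠ 0 := by
    by_contra! h
    exact hP (MvPolynomial.funext fun x => by simp [h x])
  simp only [P, map_mul, map_prod, RingHom.map_pseudoDet, mul_ne_zero_iff, prod_ne_zero_iff,
    mem_univ, forall_const] at hx
  refine ⟨Matrix.of fun i j => x (i, j), fun i j => by simpa using hx.1 (i, j), fun k => ?_⟩
  convert hx.2 k using 2
  ext a b
  simp

noncomputable def monomialLift {ι κ R : Type*} [Zero R] (O : Matrix ι κ ℝ) (c : Matrix ι κ R) :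
    Matrix ι κ (HahnSeries ℝ R) :=
  Matrix.of fun i j => HahnSeries.single (-O i j) (c i j)

section MonomialLift

variable {m : ℕ} {R : Type*} [CommRing R] (O : Matrix (Fin m) (Fin m) ℝ)
  (c : Matrix (Fin m) (Fin m) R)

theorem coeff_det_monomialLift (g : ℝ) :
    (monomialLift O c).det.coeff g = ∑ σ ∈ univ.filter fun σ : Equiv.Perm (Fin m) =>
      -∑ i, O i (σ i) = g, (Equiv.Perm.sign σ : ℤ) • ∏ i, c i (σ i) := by
  rw [← Matrix.det_transpose, Matrix.det_apply, HahnSeries.coeff_sum, sum_filter]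
  refine sum_congr rfl fun σ _ => ?_
  simp only [monomialLift, Matrix.transpose_apply, Matrix.of_apply, HahnSeries.prod_single,
    sum_neg_distrib, Units.smul_def]
  rw [HahnSeries.coeff_smul, HahnSeries.coeff_single]
  simp only [smul_ite, smul_zero, eq_comm]

theorem coeff_det_monomialLift_neg_tropDet :
    (monomialLift O c).det.coeff (-tropDet O) = pseudoDet O c := by
  rw [coeff_det_monomialLift, pseudoDet]
  simp only [neg_inj]

theorem coeff_det_monomialLift_of_lt {g : ℝ} (hg : g < -tropDet O) :
    (monomialLift O c).det.coeff g = 0 := by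
  rw [coeff_det_monomialLift]
  refine sum_eq_zero fun σ hσ => absurd (sum_le_tropDet O σ) ?_
  rw [(mem_filter.1 hσ).2.symm] at hg
  linarith

variable {O c}

theorem det_monomialLift_ne_zero (h : pseudoDet O c ≠ 0) : (monomialLift O c).det ≠ 0 :=
  HahnSeries.ne_zero_of_coeff_ne_zero (by rwa [coeff_det_monomialLift_neg_tropDet])

theorem order_det_monomialLift (h : pseudoDet O c ≠ 0) :
    (monomialLift O c).det.order = -tropDet O :=
  le_antisymm
    (HahnSeries.order_le_of_coeff_ne_zero (by rwa [coeff_det_monomialLift_neg_tropDet]))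
    ((HahnSeries.le_order_iff_forall (det_monomialLift_ne_zero h)).2 fun _ =>
      coeff_det_monomialLift_of_lt O c)

end MonomialLift

theorem T_single {o : ℝ} {a : ℂ} (ha : a ≠ 0) : T (HahnSeries.single (-o) a) = o := by
  rw [T, HahnSeries.order_single ha, neg_neg]

theorem T_neg_one_pow_mul (k : ℕ) (x : HahnSeries ℝ ℂ) : T ((-1) ^ k * x) = T x := by
  rcases neg_one_pow_eq_or (HahnSeries ℝ ℂ) k with h | h <;> simp [h, T, HahnSeries.order_neg]

theorem T_det_monomialLift {m : ℕ} {O : Matrix (Fin m) (Fin m) ℝ} {c : Matrix (Fin m) (Fin m) ℂ}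
    (h : pseudoDet O c ≠ 0) : T (monomialLift O c).det = tropDet O := by
  rw [T, order_det_monomialLift h, neg_neg]

theorem Matrix.mulVec_alternating_minors_eq_zero {n : ℕ} {R : Type*} [CommRing R]
    (B : Matrix (Fin n) (Fin (n + 1)) R) :
    B.mulVec (fun j => (-1) ^ (j : ℕ) * (B.submatrix id j.succAbove).det) = 0 := by
  funext i
  -- `B` with its row `i` repeated on top has vanishing determinant; expand it along that row.
  set M : Matrix (Fin (n + 1)) (Fin (n + 1)) R := Matrix.of (vecCons (B i) fun l => B l)
  have hM : M.det = 0 := det_zero_of_row_eq (Fin.succ_ne_zero i).symm (by ext; simp [M])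
  rw [det_succ_row_zero] at hM
  rw [Pi.zero_apply, ← hM, mulVec, dotProduct]
  refine sum_congr rfl fun j _ => ?_
  simp only [M, of_apply, cons_val_zero]
  rw [show M.submatrix Fin.succ j.succAbove = B.submatrix id j.succAbove by ext; simp [M]]
  ring

theorem one_step_lift_exists {n : ℕ} (O : Matrix (Fin n) (Fin (n + 1)) ℝ) :
    ∃ B : Matrix (Fin n) (Fin (n + 1)) (HahnSeries ℝ ℂ),
      (∀ i j, B i j ≠ 0) ∧
      (∀ i j, T (B i j) = O i j) ∧
      (∀ i : Fin (n + 1), (B.submatrix id i.succAbove).det ≠ 0) ∧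
      (∀ i : Fin (n + 1),
        T (B.submatrix id i.succAbove).det = tropDet (O.submatrix id i.succAbove)) ∧
      ∃ s : Fin (n + 1) → HahnSeries ℝ ℂ,
        (∀ i : Fin (n + 1),
          s i = (-1) ^ (i : ℕ) * (B.submatrix id i.succAbove).det) ∧
        B.mulVec s = 0 ∧
        ∀ i : Fin (n + 1), T (s i) = tropDet (O.submatrix id i.succAbove) := by
  obtain ⟨c, hc, hpd⟩ := exists_generic_coeffs (K := ℂ) O
  have hT (k : Fin (n + 1)) :
      T ((monomialLift O c).submatrix id k.succAbove).det = tropDet (O.submatrix id k.succAbove) :=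
    T_det_monomialLift (hpd k)
  refine ⟨monomialLift O c, fun i j => HahnSeries.single_ne_zero (hc i j),
    fun i j => T_single (hc i j), fun k => det_monomialLift_ne_zero (hpd k), hT, _,
    fun _ => rfl, Matrix.mulVec_alternating_minors_eq_zero _, fun k => ?_⟩
  rw [T_neg_one_pow_mul, hT]
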